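/- arXiv:2305.06855 — 5 statements merged into one kernel-verified Lean document; each statement's English description precedes it below -/
import Mathlib

section
/- For any finite connected simple graph G = (V,E), there exists a set P = {{f_1,g_1},…,{f_m,g_m}} of pairs of edges of G such that for each i the edges f_i and g_i share a vertex, the edges f_1, g_1, …, f_m, g_m are pairwise distinct, and m = ⌊|E|/2⌋; i.e., P covers all edges of G when |E| is even and all edges but one when |E| is odd. -/
/-!
Choose an endpoint `h e` of every edge `e`. If every vertex other than a root `r` is the chosen
endpoint of an even number of edges, then the edges at each vertex can be paired among themselves,
leaving at most one edge (at `r`) unpaired. Such a choice exists in a connected graph: flipping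
the choice along a walk from `v` to `r` changes the parities at `v` and `r` only.
-/

open Finset Function

namespace Finset

variable {α β : Type*} [DecidableEq β]

theorem exists_ne_map_eq_of_even_card_fibers {s : Finset α} (hs : 1 < #s) (key : α → β) (r : β)
    (heven : ∀ b ≠ r, Even #{x ∈ s | key x = b}) :
    ∃ a ∈ s, ∃ b ∈ s, a ≠ b ∧ key a = key b := by
  by_contra! hinj
  have hkey_eq : ∀ a ∈ s, key a = r := fun a ha => by
    by_contra har
    have hfiber : {x ∈ s | key x = key a} = {a} := by
      ext x
      simp only [mem_filter, mem_singleton]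
      exact ⟨fun ⟨hx, hxa⟩ => by_contra fun hne => hinj x hx a ha hne hxa,
        by rintro rfl; exact ⟨ha, rfl⟩⟩
    simpa [hfiber] using heven _ har
  obtain ⟨a, ha, b, hb, hab⟩ := one_lt_card.1 hs
  exact hinj a ha b hb hab ((hkey_eq a ha).trans (hkey_eq b hb).symm)

variable [DecidableEq α]

theorem card_filter_update_add {s : Finset α} {a : α} (ha : a ∈ s) (k : α → β) (b c : β) :
    #{x ∈ s | update k a b x = c} + (if k a = c then 1 else 0) =
      #{x ∈ s | k x = c} + if b = c then 1 else 0 := by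
  simp only [card_filter]
  rw [← add_sum_erase s _ ha, ← add_sum_erase s _ ha, update_self,
    sum_congr rfl fun x hx => by rw [update_of_ne (ne_of_mem_erase hx)]]
  ring

theorem even_card_filter_erase_erase_iff {s : Finset α} {a b : α} (ha : a ∈ s) (hb : b ∈ s)
    (hab : a ≠ b) {key : α → β} (hkey : key a = key b) (c : β) :
    Even #{x ∈ (s.erase a).erase b | key x = c} ↔ Even #{x ∈ s | key x = c} := by
  rw [filter_erase, filter_erase]
  by_cases hc : key a = c
  · have h2 : 2 ≤ #{x ∈ s | key x = c} :=
      one_lt_card.2 ⟨a, mem_filter.2 ⟨ha, hc⟩, b, mem_filter.2 ⟨hb, hkey ▸ hc⟩, hab⟩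
    rw [card_erase_of_mem (mem_erase.2 ⟨hab.symm, mem_filter.2 ⟨hb, hkey ▸ hc⟩⟩),
      card_erase_of_mem (mem_filter.2 ⟨ha, hc⟩), Nat.sub_sub, Nat.even_sub (by omega)]
    simp
  · have hc' : key b ≠ c := hkey ▸ hc
    rw [erase_eq_of_notMem (by simp [hc']), erase_eq_of_notMem (by simp [hc])]

theorem exists_pairing_of_even_card_fibers (key : α → β) (r : β) (m : ℕ) {s : Finset α}
    (hs : 2 * m ≤ #s) (heven : ∀ b ≠ r, Even #{x ∈ s | key x = b}) :
    ∃ f g : Fin m → α, (∀ i, f i ∈ s) ∧ (∀ i, g i ∈ s) ∧ (∀ i, key (f i) = key (g i)) ∧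
      Injective (Sum.elim f g) := by
  induction m generalizing s with
  | zero => exact ⟨Fin.elim0, Fin.elim0, fun i => i.elim0, fun i => i.elim0,
    fun i => i.elim0, injective_of_subsingleton _⟩
  | succ m ih =>
    obtain ⟨a, ha, b, hb, hab, hkey⟩ :=
      exists_ne_map_eq_of_even_card_fibers (by omega) key r heven
    set t := (s.erase a).erase b
    have ht : 2 * m ≤ #t := by
      rw [card_erase_of_mem (mem_erase.2 ⟨hab.symm, hb⟩), card_erase_of_mem ha]; omega
    obtain ⟨f, g, hf, hg, hfg, hinj⟩ := ih ht fun c hc =>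
      (even_card_filter_erase_erase_iff ha hb hab hkey c).2 (heven c hc)
    have hat : ∀ x ∈ t, x ≠ a := fun x hx => ne_of_mem_erase (mem_of_mem_erase hx)
    have hbt : ∀ x ∈ t, x ≠ b := fun x hx => ne_of_mem_erase hx
    refine ⟨Fin.cons a f, Fin.cons b g, Fin.cases ha fun i => mem_of_mem_erase
      (mem_of_mem_erase (hf i)), Fin.cases hb fun i => mem_of_mem_erase (mem_of_mem_erase (hg i)),
      Fin.cases hkey hfg, ?_⟩
    refine Injective.sumElim ?_ ?_ fun i j => ?_
    · exact Fin.cons_injective_iff.2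
        ⟨fun ⟨i, hi⟩ => hat _ (hf i) hi, hinj.comp Sum.inl_injective⟩
    · exact Fin.cons_injective_iff.2
        ⟨fun ⟨i, hi⟩ => hbt _ (hg i) hi, hinj.comp Sum.inr_injective⟩
    · cases i using Fin.cases <;> cases j using Fin.cases
      · exact hab
      · exact (hat _ (hg _)).symm
      · exact hbt _ (hf _)
      · exact fun h => Sum.inl_ne_inr (hinj h)

end Finset

namespace SimpleGraph

variable {V : Type*} [Fintype V] [DecidableEq V] (G : SimpleGraph V) [DecidableRel G.Adj]

def headParity (h : Sym2 V → V) (v : V) : ZMod 2 := #{e ∈ G.edgeFinset | h e = v}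

variable {G}

theorem exists_headParity_flip {u w : V} (huw : G.Adj u w) {h : Sym2 V → V}
    (hh : ∀ e, h e ∈ e) :
    ∃ h' : Sym2 V → V, (∀ e, h' e ∈ e) ∧ ∀ x,
      G.headParity h' x = G.headParity h x + (if u = x then 1 else 0) + if w = x then 1 else 0 := by
  set b := if h s(u, w) = u then w else u
  refine ⟨update h s(u, w) b, fun e => ?_, fun x => ?_⟩
  · rcases eq_or_ne e s(u, w) with rfl | hne
    · rw [update_self]; unfold b; split_ifs <;> simp
    · rw [update_of_ne hne]; exact hh e
  · have hcount := congrArg (Nat.cast : ℕ → ZMod 2)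
      (card_filter_update_add (G.mem_edgeFinset.2 (G.mem_edgeSet.2 huw)) h b x)
    push_cast at hcount
    unfold headParity
    rw [← add_right_cancel_iff (a := if h s(u, w) = x then 1 else 0), hcount]
    rcases Sym2.mem_iff.1 (hh s(u, w)) with hu | hw
    · simp only [b, hu, if_true]; ring_nf; reduce_mod_char
    · simp only [b, hw, if_neg huw.ne']; ring_nf; reduce_mod_char

theorem Walk.exists_headParity_shift {u w : V} (p : G.Walk u w) {h : Sym2 V → V}
    (hh : ∀ e, h e ∈ e) :
    ∃ h' : Sym2 V → V, (∀ e, h' e ∈ e) ∧ ∀ x,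
      G.headParity h' x = G.headParity h x + (if u = x then 1 else 0) + if w = x then 1 else 0 := by
  induction p generalizing h with
  | nil => exact ⟨h, hh, fun x => by ring_nf; reduce_mod_char⟩
  | cons hadj p ih =>
    obtain ⟨h₁, hh₁, hp₁⟩ := exists_headParity_flip hadj hh
    obtain ⟨h₂, hh₂, hp₂⟩ := ih hh₁
    exact ⟨h₂, hh₂, fun x => by rw [hp₂, hp₁]; ring_nf; reduce_mod_char⟩

theorem Connected.exists_headParity_eq_zero (hG : G.Connected) (r : V) :
    ∃ h : Sym2 V → V, (∀ e, h e ∈ e) ∧ ∀ v ≠ r, G.headParity h v = 0 := by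
  let h₀ : Sym2 V → V := fun e => e.out.1
  have hadjust : ∀ T : Finset V, ∃ h : Sym2 V → V, (∀ e, h e ∈ e) ∧
      ∀ x ≠ r, G.headParity h x = G.headParity h₀ x + if x ∈ T then 1 else 0 := by
    intro T
    induction T using Finset.induction_on with
    | empty => exact ⟨h₀, Sym2.out_fst_mem, by simp⟩
    | insert v T hvT ih =>
      obtain ⟨h, hh, hT⟩ := ih
      obtain ⟨h', hh', hvr⟩ := (hG.preconnected v r).some.exists_headParity_shift hh
      refine ⟨h', hh', fun x hx => ?_⟩
      rw [hvr, hT x hx, if_neg hx.symm, add_zero, add_assoc]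
      by_cases hxv : x = v
      · subst hxv; simp [hvT]
      · simp [hxv, Ne.symm hxv]
  obtain ⟨h, hh, hT⟩ := hadjust {x | G.headParity h₀ x = 1}
  have hcancel : ∀ a : ZMod 2, a + (if a = 1 then 1 else 0) = 0 := by decide
  exact ⟨h, hh, fun v hv => by simpa [hcancel] using hT v hv⟩

end SimpleGraph

/-- **Edge covering for connected graphs**: every finite connected simple graph `G = (V,E)`
admits `⌊|E|/2⌋` pairs `{f_i, g_i}` of adjacent edges (each pair sharing a vertex), with all
the edges `f_1, g_1, …, f_m, g_m` pairwise distinct; thus all edges are covered when `|E|` is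
even, and all but one when `|E|` is odd. -/
theorem connected_graph_adjacent_edge_pairing {V : Type*} [Fintype V] [DecidableEq V]
    (G : SimpleGraph V) [DecidableRel G.Adj] (hG : G.Connected) :
    ∃ f g : Fin (G.edgeFinset.card / 2) → Sym2 V,
      (∀ i, f i ∈ G.edgeFinset) ∧ (∀ i, g i ∈ G.edgeFinset) ∧
      (∀ i, ∃ v : V, v ∈ f i ∧ v ∈ g i) ∧
      Function.Injective (Sum.elim f g) := by
  obtain ⟨r⟩ := hG.nonempty
  obtain ⟨h, hh, heven⟩ := hG.exists_headParity_eq_zero r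
  obtain ⟨f, g, hf, hg, hfg, hinj⟩ := exists_pairing_of_even_card_fibers h r _
    (Nat.mul_div_le _ 2) fun v hv => ZMod.natCast_eq_zero_iff_even.1 (heven v hv)
  exact ⟨f, g, hf, hg, fun i => ⟨h (f i), hh _, hfg i ▸ hh _⟩, hinj⟩
end

section
/- Let c be the infimum, over pairs (ρ_{12}, ρ_{23}) of density operators on ℂ²⊗ℂ² satisfying the consistency condition Tr_1[ρ_{12}] = Tr_3[ρ_{23}] and the weak monotonicity constraint S(2|1)_{ρ_{12}} + S(2|3)_{ρ_{23}} ≥ 0, of −(1/2)(⟨ψ⁻|ρ_{12}|ψ⁻⟩ + ⟨ψ⁻|ρ_{23}|ψ⁻⟩). Then for every finite connected simple graph G = (V,E) with |E| ≥ 1 and every family (ρ_e)_{e∈E} of two-qubit density operators indexed by the edges of G that is locally consistent (for every vertex v and every two edges e, e' containing v, the one-body marginal of ρ_e at v equals that of ρ_{e'}) and satisfies all weak monotonicity constraints S(v|j)_{ρ_{vj}} + S(v|k)_{ρ_{vk}} ≥ 0 for every vertex v and distinct edges vj, vk ∈ E, one has Σ_{e∈E} Tr[(−|ψ⁻⟩⟨ψ⁻|)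 ρ_e] ≥ 2c·⌊|E|/2⌋ − (|E| mod 2). -/
open scoped Matrix Kronecker ComplexOrder

noncomputable section

def IsDensityOp {n : Type*} [Fintype n] [DecidableEq n] (ρ : Matrix n n ℂ) : Prop :=
  ρ.PosSemidef ∧ ρ.trace = 1

/-- Von Neumann entropy of a (Hermitian) matrix: `-∑ λᵢ log λᵢ`. -/
noncomputable def vNE {n : Type*} [Fintype n] [DecidableEq n] (ρ : Matrix n n ℂ) : ℝ :=
  if h : ρ.IsHermitian then -∑ i, h.eigenvalues i * Real.log (h.eigenvalues i) else 0

/-- Partial trace over the first tensor factor. -/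
noncomputable def ptraceL {a b : Type*} [Fintype a] [Fintype b]
    (ρ : Matrix (a × b) (a × b) ℂ) : Matrix b b ℂ :=
  Matrix.of fun i j => ∑ k : a, ρ (k, i) (k, j)

/-- Partial trace over the second tensor factor. -/
noncomputable def ptraceR {a b : Type*} [Fintype a] [Fintype b]
    (ρ : Matrix (a × b) (a × b) ℂ) : Matrix a a ℂ :=
  Matrix.of fun i j => ∑ k : b, ρ (i, k) (j, k)

end
noncomputable section

/-- The two-qubit singlet state `|ψ⁻⟩ = (|01⟩ - |10⟩)/√2`. -/
noncomputable def psiMinus : Fin 2 × Fin 2 → ℂ :=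
  fun p => if p = (0, 1) then (Real.sqrt 2 : ℂ)⁻¹
    else if p = (1, 0) then -(Real.sqrt 2 : ℂ)⁻¹ else 0

/-- The rank-one projector `|ψ⁻⟩⟨ψ⁻|` onto the singlet state. -/
noncomputable def singletProj : Matrix (Fin 2 × Fin 2) (Fin 2 × Fin 2) ℂ :=
  Matrix.of fun p q => psiMinus p * (starRingEnd ℂ) (psiMinus q)

/-- `c`: the infimum over pairs `(ρ₁₂, ρ₂₃)` of two-qubit density operators with
`Tr₁[ρ₁₂] = Tr₃[ρ₂₃]` and `S(2|1)_{ρ₁₂} + S(2|3)_{ρ₂₃} ≥ 0` of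
`-(1/2)(⟨ψ⁻|ρ₁₂|ψ⁻⟩ + ⟨ψ⁻|ρ₂₃|ψ⁻⟩)`. -/
noncomputable def cWM : ℝ :=
  sInf { x : ℝ | ∃ ρ12 ρ23 : Matrix (Fin 2 × Fin 2) (Fin 2 × Fin 2) ℂ,
    IsDensityOp ρ12 ∧ IsDensityOp ρ23 ∧
    ptraceL ρ12 = ptraceR ρ23 ∧
    0 ≤ (vNE ρ12 - vNE (ptraceR ρ12)) + (vNE ρ23 - vNE (ptraceL ρ23)) ∧
    x = -(1 / 2) * ((Matrix.trace (singletProj * ρ12)).re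
      + (Matrix.trace (singletProj * ρ23)).re) }


/-!
Orient the edges so that every vertex except a root `r` has even in-degree: starting from any
orientation, reversing the edges of a walk from `v` to `r` changes the parity of the in-degree at
`v` and at `r` only. Two edges pointing into the same vertex share it, so by local consistency and
weak monotonicity (after swapping the factors of one of them) they form an admissible pair for `c`
and have energy at least `2c`; averaging over pairs, `k ≠ 1` edges pointing into one vertex have
energy at least `c k`. A single edge has energy at least `-1 ≤ c`, and only the root can have odd
in-degree, exactly when `|E|` is odd.
-/

open Matrix Finset

section

variable {m n : Type*} [Fintype m] [Fintype n]

lemma trace_reindex (e : m ≃ n) (A : Matrix m m ℂ) : (reindex e e A).trace = A.trace :=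
  Equiv.sum_comp e.symm fun i => A i i

variable [DecidableEq m] [DecidableEq n]

lemma vNE_eq_neg_sum_roots {A : Matrix n n ℂ} (hA : A.IsHermitian) :
    vNE A = -(A.charpoly.roots.map fun z => z.re * Real.log z.re).sum := by
  rw [vNE, dif_pos hA, hA.roots_charpoly_eq_eigenvalues, Multiset.map_map]
  rfl

lemma vNE_eq_of_charpoly_eq {A : Matrix m m ℂ} {B : Matrix n n ℂ} (hA : A.IsHermitian)
    (hB : B.IsHermitian) (h : A.charpoly = B.charpoly) : vNE A = vNE B := by
  rw [vNE_eq_neg_sum_roots hA, vNE_eq_neg_sum_roots hB, h]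

lemma vNE_reindex (e : m ≃ n) {A : Matrix m m ℂ} (hA : A.IsHermitian) :
    vNE (reindex e e A) = vNE A :=
  vNE_eq_of_charpoly_eq (hA.submatrix _) hA (charpoly_reindex e A)

lemma IsDensityOp.reindex (e : m ≃ n) {ρ : Matrix m m ℂ} (hρ : IsDensityOp ρ) :
    IsDensityOp (reindex e e ρ) :=
  ⟨hρ.1.submatrix _, (trace_reindex e ρ).trans hρ.2⟩

lemma re_trace_mul_le_one {P ρ : Matrix n n ℂ} (hP : IsStarProjection P) (hρ : IsDensityOp ρ) :
    (P * ρ).trace.re ≤ 1 := by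
  set Q := 1 - P
  have hQ : Qᴴ = Q := hP.one_sub.isSelfAdjoint
  have hQρ : (Q * ρ).trace = (Q * ρ * Qᴴ).trace := by
    rw [hQ, trace_mul_cycle, hP.one_sub.isIdempotentElem.eq]
  have hnonneg : 0 ≤ (Q * ρ).trace := hQρ ▸ (hρ.1.mul_mul_conjTranspose_same Q).trace_nonneg
  have htrace : (Q * ρ).trace = 1 - (P * ρ).trace := by
    rw [sub_mul, one_mul, trace_sub, hρ.2]
  rw [htrace, Complex.nonneg_iff] at hnonneg
  simpa using hnonneg.1

end

section PartialTrace

variable {a b : Type*} [Fintype a] [Fintype b]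

lemma ptraceL_reindex_prodComm (ρ : Matrix (a × b) (a × b) ℂ) :
    ptraceL (reindex (Equiv.prodComm a b) (Equiv.prodComm a b) ρ) = ptraceR ρ := by
  ext i j
  simp [ptraceL, ptraceR]

lemma ptraceR_reindex_prodComm (ρ : Matrix (a × b) (a × b) ℂ) :
    ptraceR (reindex (Equiv.prodComm a b) (Equiv.prodComm a b) ρ) = ptraceL ρ := by
  ext i j
  simp [ptraceL, ptraceR]

end PartialTrace

lemma isStarProjection_vecMulVec {n : Type*} [Fintype n] {ψ : n → ℂ} (hψ : star ψ ⬝ᵥ ψ = 1) :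
    IsStarProjection (vecMulVec ψ (star ψ)) where
  isIdempotentElem := by rw [IsIdempotentElem, vecMulVec_mul_vecMulVec, hψ, one_smul]
  isSelfAdjoint := by
    rw [IsSelfAdjoint, star_eq_conjTranspose, conjTranspose_vecMulVec, star_star]

lemma singletProj_eq_vecMulVec : singletProj = vecMulVec psiMinus (star psiMinus) := rfl

lemma star_psiMinus_dotProduct_self : star psiMinus ⬝ᵥ psiMinus = 1 := by
  have half : ((Real.sqrt 2 : ℂ))⁻¹ * ((Real.sqrt 2 : ℂ))⁻¹ = (2 : ℂ)⁻¹ := by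
    rw [← mul_inv, ← Complex.ofReal_mul, Real.mul_self_sqrt zero_le_two]
    norm_num
  simp only [dotProduct, Fintype.sum_prod_type, Fin.sum_univ_two, Pi.star_apply, psiMinus,
    Prod.ext_iff, RCLike.star_def]
  norm_num [half]

lemma isStarProjection_singletProj : IsStarProjection singletProj :=
  singletProj_eq_vecMulVec ▸ isStarProjection_vecMulVec star_psiMinus_dotProduct_self

lemma re_trace_singletProj_mul_le_one {ρ : Matrix (Fin 2 × Fin 2) (Fin 2 × Fin 2) ℂ}
    (hρ : IsDensityOp ρ) : (singletProj * ρ).trace.re ≤ 1 :=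
  re_trace_mul_le_one isStarProjection_singletProj hρ

lemma psiMinus_swap (p : Fin 2 × Fin 2) : psiMinus p.swap = -psiMinus p := by
  rcases p with ⟨i, j⟩
  fin_cases i <;> fin_cases j <;> simp [psiMinus, Prod.swap, Prod.ext_iff]

lemma reindex_prodComm_singletProj :
    reindex (Equiv.prodComm _ _) (Equiv.prodComm _ _) singletProj = singletProj := by
  ext p q
  simp [singletProj, psiMinus_swap]

lemma trace_singletProj_mul_reindex_prodComm (ρ : Matrix (Fin 2 × Fin 2) (Fin 2 × Fin 2) ℂ) :
    (singletProj * reindex (Equiv.prodComm _ _) (Equiv.prodComm _ _) ρ).trace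
      = (singletProj * ρ).trace := by
  conv_lhs => rw [← reindex_prodComm_singletProj]
  rw [reindex_apply, reindex_apply, submatrix_mul_equiv, ← reindex_apply, trace_reindex]

lemma neg_one_le_cWM : -1 ≤ cWM := by
  refine Real.le_sInf ?_ (by norm_num)
  rintro _ ⟨ρ12, ρ23, h12, h23, -, -, rfl⟩
  linarith [re_trace_singletProj_mul_le_one h12, re_trace_singletProj_mul_le_one h23]

/-- Two states sharing their first factor form an admissible pair for `cWM` once the first one
has its factors swapped. -/
lemma two_mul_cWM_le {σ τ : Matrix (Fin 2 × Fin 2) (Fin 2 × Fin 2) ℂ} (hσ : IsDensityOp σ)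
    (hτ : IsDensityOp τ) (hcons : ptraceR σ = ptraceR τ)
    (hwm : 0 ≤ (vNE σ - vNE (ptraceL σ)) + (vNE τ - vNE (ptraceL τ))) :
    2 * cWM ≤ -(singletProj * σ).trace.re + -(singletProj * τ).trace.re := by
  set σ' := reindex (Equiv.prodComm _ _) (Equiv.prodComm _ _) σ
  have hle : cWM ≤ -(1 / 2) * ((singletProj * σ').trace.re + (singletProj * τ).trace.re) := by
    refine csInf_le ⟨-1, ?_⟩ ⟨σ', τ, hσ.reindex _, hτ, ?_, ?_, rfl⟩
    · rintro _ ⟨ρ12, ρ23, h12, h23, -, -, rfl⟩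
      linarith [re_trace_singletProj_mul_le_one h12, re_trace_singletProj_mul_le_one h23]
    · rw [ptraceL_reindex_prodComm, hcons]
    · rwa [vNE_reindex _ hσ.1.isHermitian, ptraceR_reindex_prodComm]
  rw [trace_singletProj_mul_reindex_prodComm] at hle
  linarith

namespace SimpleGraph

variable {V : Type*} [Fintype V] [DecidableEq V] (G : SimpleGraph V) [DecidableRel G.Adj]

def IsOrientation (f : Sym2 V → V) : Prop := ∀ e ∈ G.edgeFinset, f e ∈ e

def inEdges (f : Sym2 V → V) (v : V) : Finset (Sym2 V) := {e ∈ G.edgeFinset | f e = v}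

variable {G}

lemma IsOrientation.exists_adj_of_mem_inEdges {f : Sym2 V → V} (hf : G.IsOrientation f)
    {v : V} {e : Sym2 V} (he : e ∈ G.inEdges f v) : ∃ w, G.Adj v w ∧ e = s(v, w) := by
  obtain ⟨heG, hfe⟩ := mem_filter.mp he
  obtain ⟨w, rfl⟩ := Sym2.mem_iff_exists.mp (hfe ▸ hf e heG)
  exact ⟨w, mem_edgeFinset.mp heG, rfl⟩

lemma IsOrientation.exists_flip_edge {f : Sym2 V → V} (hf : G.IsOrientation f) {a b : V}
    (hab : G.Adj a b) :
    ∃ f' : Sym2 V → V, G.IsOrientation f' ∧ ∀ y,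
      (#(G.inEdges f' y) : ZMod 2)
        = #(G.inEdges f y) + (if y = a then 1 else 0) + (if y = b then 1 else 0) := by
  have he₀ : s(a, b) ∈ G.edgeFinset := mem_edgeFinset.mpr hab
  refine ⟨Function.update f s(a, b) (if f s(a, b) = a then b else a), fun e he => ?_,
    fun y => ?_⟩
  · by_cases h : e = s(a, b)
    · subst h
      simp only [Function.update_self]
      split_ifs <;> simp
    · simpa only [Function.update_of_ne h] using hf e he
  · simp only [inEdges, natCast_card_filter, ← add_sum_erase _ _ he₀]
    have hrest : ∑ e ∈ G.edgeFinset.erase s(a, b),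
          (if Function.update f s(a, b) (if f s(a, b) = a then b else a) e = y then (1 : ZMod 2)
            else 0)
        = ∑ e ∈ G.edgeFinset.erase s(a, b), if f e = y then 1 else 0 :=
      sum_congr rfl fun e he => by rw [Function.update_of_ne (ne_of_mem_erase he)]
    rw [hrest, Function.update_self]
    generalize ∑ e ∈ G.edgeFinset.erase s(a, b), (if f e = y then (1 : ZMod 2) else 0) = R
    simp only [@eq_comm _ y]
    rcases Sym2.mem_iff.mp (hf _ he₀) with h | h
    · rw [h, if_pos rfl]
      linear_combination -CharTwo.add_self_eq_zero (if a = y then (1 : ZMod 2) else 0)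
    · rw [h, if_neg hab.ne.symm]
      linear_combination -CharTwo.add_self_eq_zero (if b = y then (1 : ZMod 2) else 0)

lemma IsOrientation.exists_flip_walk {f : Sym2 V → V} (hf : G.IsOrientation f) {u r : V}
    (p : G.Walk u r) :
    ∃ f' : Sym2 V → V, G.IsOrientation f' ∧ ∀ y,
      (#(G.inEdges f' y) : ZMod 2)
        = #(G.inEdges f y) + (if y = u then 1 else 0) + (if y = r then 1 else 0) := by
  induction p generalizing f with
  | @nil w =>
    refine ⟨f, hf, fun y => ?_⟩
    linear_combination -CharTwo.add_self_eq_zero (if y = w then (1 : ZMod 2) else 0)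
  | @cons u x r hux p ih =>
    obtain ⟨f₁, hf₁, h₁⟩ := hf.exists_flip_edge hux
    obtain ⟨f₂, hf₂, h₂⟩ := ih hf₁
    refine ⟨f₂, hf₂, fun y => ?_⟩
    rw [h₂, h₁]
    linear_combination CharTwo.add_self_eq_zero (if y = x then (1 : ZMod 2) else 0)

lemma Connected.exists_orientation_flip_on (hG : G.Connected) (r : V) {f : Sym2 V → V}
    (hf : G.IsOrientation f) (S : Finset V) :
    ∃ f' : Sym2 V → V, G.IsOrientation f' ∧ ∀ y ≠ r,
      (#(G.inEdges f' y) : ZMod 2) = #(G.inEdges f y) + if y ∈ S then 1 else 0 := by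
  induction S using Finset.induction_on with
  | empty => exact ⟨f, hf, fun y _ => by simp⟩
  | @insert v S hvS ih =>
    obtain ⟨f₁, hf₁, h₁⟩ := ih
    obtain ⟨f₂, hf₂, h₂⟩ := hf₁.exists_flip_walk (hG.preconnected v r).some
    refine ⟨f₂, hf₂, fun y hyr => ?_⟩
    rw [h₂, h₁ y hyr, if_neg hyr]
    by_cases hyv : y = v
    · subst hyv
      simp [hvS]
    · simp [hyv]

theorem Connected.exists_orientation_even_inEdges (hG : G.Connected) (r : V) :
    ∃ f : Sym2 V → V, G.IsOrientation f ∧ ∀ v ≠ r, Even #(G.inEdges f v) := by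
  let f₀ : Sym2 V → V := fun e => e.out.1
  obtain ⟨f, hf, hflip⟩ := hG.exists_orientation_flip_on r (f := f₀) (fun e _ => e.out_fst_mem)
    {v | (#(G.inEdges f₀ v) : ZMod 2) = 1}
  refine ⟨f, hf, fun v hvr => ?_⟩
  rw [← ZMod.natCast_eq_zero_iff_even, hflip v hvr]
  simp only [mem_filter, mem_univ, true_and]
  generalize (#(G.inEdges f₀ v) : ZMod 2) = t
  revert t
  decide

end SimpleGraph

section Averaging

variable {α : Type*} [DecidableEq α] {T : Finset α} {F : α → ℝ} {c : ℝ}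

lemma mul_card_le_sum_of_pairwise (hT : #T ≠ 1)
    (hpair : ∀ a ∈ T, ∀ b ∈ T, a ≠ b → 2 * c ≤ F a + F b) : c * #T ≤ ∑ a ∈ T, F a := by
  rcases T.eq_empty_or_nonempty with rfl | hT₀
  · simp
  have hcard : (2 : ℝ) ≤ #T := by exact_mod_cast (by have := hT₀.card_pos; omega : 2 ≤ #T)
  have hrow : ∀ a ∈ T, 2 * c * (#T - 1) ≤ (#T - 2) * F a + ∑ b ∈ T, F b := by
    intro a ha
    have := sum_le_sum fun b hb => hpair a ha b (mem_of_mem_erase hb) (ne_of_mem_erase hb).symm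
    rw [sum_const, sum_add_distrib, sum_const, card_erase_of_mem ha, sum_erase_eq_sub ha,
      nsmul_eq_mul, nsmul_eq_mul, Nat.cast_pred hT₀.card_pos] at this
    linarith
  have hsum := sum_le_sum hrow
  rw [sum_const, nsmul_eq_mul, sum_add_distrib, ← mul_sum, sum_const, nsmul_eq_mul] at hsum
  have hscaled : 2 * (#T - 1) * (c * #T) ≤ 2 * (#T - 1) * ∑ a ∈ T, F a := by linarith
  exact le_of_mul_le_mul_left hscaled (by linarith)

lemma mul_card_sub_le_sum_of_pairwise (hc : -1 ≤ c) (hone : ∀ a ∈ T, -1 ≤ F a)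
    (hpair : ∀ a ∈ T, ∀ b ∈ T, a ≠ b → 2 * c ≤ F a + F b) :
    c * #T - (1 + c) * (#T % 2 : ℕ) ≤ ∑ a ∈ T, F a := by
  by_cases hT : #T = 1
  · obtain ⟨a, rfl⟩ := card_eq_one.mp hT
    simpa using hone a (mem_singleton_self a)
  · have hodd : 0 ≤ (1 + c) * (#T % 2 : ℕ) := mul_nonneg (by linarith) (Nat.cast_nonneg _)
    linarith [mul_card_le_sum_of_pairwise hT hpair]

end Averaging

lemma sum_mod_two_eq_of_even {ι : Type*} [Fintype ι] {k : ι → ℕ} {r : ι}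
    (h : ∀ i ≠ r, Even (k i)) : ∑ i, k i % 2 = (∑ i, k i) % 2 := by
  have hsingle : ∑ i, k i % 2 = k r % 2 :=
    sum_eq_single r (fun i _ hi => Nat.even_iff.mp (h i hi)) (by simp)
  rw [sum_nat_mod, hsingle, Nat.mod_mod]

lemma le_sum_of_fiberwise_pairwise {ι β : Type*} [Fintype ι] [DecidableEq ι] [DecidableEq β]
    {s : Finset β} {g : β → ι} {F : β → ℝ} {c : ℝ} {r : ι}
    (heven : ∀ i ≠ r, Even #{b ∈ s | g b = i}) (hc : -1 ≤ c)
    (hone : ∀ i, ∀ b ∈ {b ∈ s | g b = i}, -1 ≤ F b)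
    (hpair : ∀ i, ∀ a ∈ {b ∈ s | g b = i}, ∀ b ∈ {b ∈ s | g b = i}, a ≠ b →
      2 * c ≤ F a + F b) :
    2 * c * (#s / 2 : ℕ) - (#s % 2 : ℕ) ≤ ∑ b ∈ s, F b := by
  have hcard : #s = ∑ i, #{b ∈ s | g b = i} := card_eq_sum_card_fiberwise fun b _ => mem_univ (g b)
  calc 2 * c * (#s / 2 : ℕ) - (#s % 2 : ℕ) = c * #s - (1 + c) * (#s % 2 : ℕ) := by
        have := congrArg (Nat.cast (R := ℝ)) (Nat.div_add_mod #s 2)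
        push_cast at this
        linear_combination c * this
    _ = ∑ i, (c * #{b ∈ s | g b = i} - (1 + c) * (#{b ∈ s | g b = i} % 2 : ℕ)) := by
        rw [sum_sub_distrib, ← mul_sum, ← mul_sum, hcard, ← sum_mod_two_eq_of_even heven]
        push_cast
        rfl
    _ ≤ ∑ i, ∑ b ∈ s with g b = i, F b :=
        sum_le_sum fun i _ => mul_card_sub_le_sum_of_pairwise hc (hone i) (hpair i)
    _ = ∑ b ∈ s, F b := sum_fiberwise_of_maps_to (fun b _ => mem_univ (g b)) F

theorem energy_lower_bound_from_weak_monotonicity_general {V : Type*} [Fintype V] [DecidableEq V]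
    (G : SimpleGraph V) [DecidableRel G.Adj] (hG : G.Connected)
    (ρ : V → V → Matrix (Fin 2 × Fin 2) (Fin 2 × Fin 2) ℂ)
    (hdens : ∀ v w, G.Adj v w → IsDensityOp (ρ v w))
    (hcons : ∀ v w w', G.Adj v w → G.Adj v w' →
      ptraceR (ρ v w) = ptraceR (ρ v w'))
    (hWM : ∀ v w w', G.Adj v w → G.Adj v w' → w ≠ w' →
      0 ≤ (vNE (ρ v w) - vNE (ptraceL (ρ v w)))
        + (vNE (ρ v w') - vNE (ptraceL (ρ v w'))))
    (F : Sym2 V → ℝ)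
    (hF : ∀ v w, G.Adj v w → F s(v, w) = -(Matrix.trace (singletProj * ρ v w)).re) :
    2 * cWM * ((G.edgeFinset.card / 2 : ℕ) : ℝ) - ((G.edgeFinset.card % 2 : ℕ) : ℝ)
      ≤ ∑ e ∈ G.edgeFinset, F e := by
  obtain ⟨r⟩ := hG.nonempty
  obtain ⟨f, hf, heven⟩ := hG.exists_orientation_even_inEdges r
  have hone : ∀ v, ∀ e ∈ G.inEdges f v, -1 ≤ F e := by
    intro v e he
    obtain ⟨w, hvw, rfl⟩ := hf.exists_adj_of_mem_inEdges he
    rw [hF v w hvw]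
    linarith [re_trace_singletProj_mul_le_one (hdens v w hvw)]
  have hpair : ∀ v, ∀ e₁ ∈ G.inEdges f v, ∀ e₂ ∈ G.inEdges f v, e₁ ≠ e₂ →
      2 * cWM ≤ F e₁ + F e₂ := by
    intro v e₁ he₁ e₂ he₂ hne
    obtain ⟨w₁, hvw₁, rfl⟩ := hf.exists_adj_of_mem_inEdges he₁
    obtain ⟨w₂, hvw₂, rfl⟩ := hf.exists_adj_of_mem_inEdges he₂
    rw [hF v w₁ hvw₁, hF v w₂ hvw₂]
    exact two_mul_cWM_le (hdens v w₁ hvw₁) (hdens v w₂ hvw₂) (hcons v w₁ w₂ hvw₁ hvw₂)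
      (hWM v w₁ w₂ hvw₁ hvw₂ (by rintro rfl; exact hne rfl))
  exact le_sum_of_fiberwise_pairwise heven neg_one_le_cWM hone hpair

/-- For the anti-ferromagnetic Hamiltonian `H = Σ_{e∈E} -|ψ⁻⟩⟨ψ⁻|_e` on a finite connected
graph, any locally consistent family of two-qubit edge marginals `(ρ_e)` (with factors
associated to the endpoints, encoded by an oriented family `ρ v w` with the swap symmetry)
satisfying all weak monotonicity constraints `S(v|j) + S(v|k) ≥ 0` has energy at least
`2c⌊|E|/2⌋ - (|E| mod 2)`. The edge energies are encoded by any `F : Sym2 V → ℝ` that agrees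
with `-⟨ψ⁻|ρ_{vw}|ψ⁻⟩` on every edge. -/
theorem energy_lower_bound_from_weak_monotonicity {V : Type*} [Fintype V] [DecidableEq V]
    (G : SimpleGraph V) [DecidableRel G.Adj] (hG : G.Connected)
    (hE : 1 ≤ G.edgeFinset.card)
    (ρ : V → V → Matrix (Fin 2 × Fin 2) (Fin 2 × Fin 2) ℂ)
    (hdens : ∀ v w, G.Adj v w → IsDensityOp (ρ v w))
    (hsym : ∀ v w, G.Adj v w →
      ρ w v = Matrix.of fun p q => ρ v w p.swap q.swap)
    (hcons : ∀ v w w', G.Adj v w → G.Adj v w' →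
      ptraceR (ρ v w) = ptraceR (ρ v w'))
    (hWM : ∀ v w w', G.Adj v w → G.Adj v w' → w ≠ w' →
      0 ≤ (vNE (ρ v w) - vNE (ptraceL (ρ v w)))
        + (vNE (ρ v w') - vNE (ptraceL (ρ v w'))))
    (F : Sym2 V → ℝ)
    (hF : ∀ v w, G.Adj v w → F s(v, w) = -(Matrix.trace (singletProj * ρ v w)).re) :
    2 * cWM * ((G.edgeFinset.card / 2 : ℕ) : ℝ) - ((G.edgeFinset.card % 2 : ℕ) : ℝ)
      ≤ ∑ e ∈ G.edgeFinset, F e :=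
  energy_lower_bound_from_weak_monotonicity_general G hG ρ hdens hcons hWM F hF

end
end

section
/- Forward–backward shield identity: let l ≥ 2 and let (ρ_I)_I be an l-interval-consistent family of density operators on the sites {1,…,k} with local dimension d. For i ∈ {1,…,k} define 𝒩_i^− = {max(1,i−l+1),…,i−1} and 𝒩_i^+ = {i+1,…,min(k,i+l−1)}. Then Σ_{i=1}^k S(i|𝒩_i^−) = Σ_{i=1}^k S(i|𝒩_i^+), where each conditional entropy is computed from the corresponding interval marginal. -/
open scoped Matrix Kronecker ComplexOrder

noncomputable section

/-- Marginal (partial trace) of a state on the sites `S` down to a subset `T ⊆ S`: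
`Tr_{S∖T}[ρ_S]`. -/
noncomputable def margSub {V : Type*} [DecidableEq V] {d : ℕ} {S T : Finset V} (hT : T ⊆ S)
    (ρ : Matrix (S → Fin d) (S → Fin d) ℂ) : Matrix (T → Fin d) (T → Fin d) ℂ :=
  Matrix.of fun f g => ∑ k : ((S \ T : Finset V) → Fin d),
    ρ (fun x => if hx : x.1 ∈ T then f ⟨x.1, hx⟩ else k ⟨x.1, Finset.mem_sdiff.mpr ⟨x.2, hx⟩⟩)
      (fun x => if hx : x.1 ∈ T then g ⟨x.1, hx⟩ else k ⟨x.1, Finset.mem_sdiff.mpr ⟨x.2, hx⟩⟩)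


/-- Telescoping sum over an interval. -/
lemma tel_shield (g : ℕ → ℝ) : ∀ (b a : ℕ), a ≤ b + 1 →
    ∑ i ∈ Finset.Icc a b, (g i - g (i + 1)) = g a - g (b + 1) := by
  intro b
  induction b with
  | zero =>
    intro a ha
    interval_cases a <;> simp
  | succ b ih =>
    intro a ha
    rcases Nat.lt_or_ge a (b + 2) with h | h
    · rw [Finset.sum_Icc_succ_top (by omega : a ≤ b + 1), ih a (by omega)]
      ring
    · have : a = b + 2 := by omega
      subst this
      rw [Finset.Icc_eq_empty (by omega)]
      simp

/-- The purely combinatorial forward–backward rearrangement identity. -/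
lemma key_shield (f : ℕ → ℕ → ℝ) (l : ℕ) (hl : 2 ≤ l) : ∀ k : ℕ,
    ∑ i ∈ Finset.Icc 1 k, (f (max 1 (i + 1 - l)) i - f (max 1 (i + 1 - l)) (i - 1))
      = (∑ i ∈ Finset.Icc 1 k, (f i (min k (i + l - 1)) - f (i + 1) (min k (i + l - 1))))
        + f (k + 1) k - f 1 0 := by
  intro k
  induction k with
  | zero => simp
  | succ k ih =>
    have hm1 : 1 ≤ max 1 (k + 2 - l) := le_max_left _ _
    set m := max 1 (k + 2 - l) with hm
    have hmk : m ≤ k + 1 := by omega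
    have split : ∀ F : ℕ → ℝ, ∑ i ∈ Finset.Icc 1 k, F i
        = ∑ i ∈ Finset.Ico 1 m, F i + ∑ i ∈ Finset.Icc m k, F i := by
      intro F
      rw [← Finset.Ico_add_one_right_eq_Icc 1 k, ← Finset.sum_Ico_consecutive F hm1 (by omega : m ≤ k + 1),
        Finset.Ico_add_one_right_eq_Icc]
    have hA : ∑ i ∈ Finset.Icc 1 k,
          (f i (min (k+1) (i + l - 1)) - f (i + 1) (min (k+1) (i + l - 1)))
        = ∑ i ∈ Finset.Ico 1 m, (f i (min k (i + l - 1)) - f (i + 1) (min k (i + l - 1)))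
          + (f m (k + 1) - f (k + 1) (k + 1)) := by
      rw [split]
      congr 1
      · refine Finset.sum_congr rfl fun i hi => ?_
        simp only [Finset.mem_Ico] at hi
        have : min (k + 1) (i + l - 1) = min k (i + l - 1) := by omega
        rw [this]
      · rw [← tel_shield (fun i => f i (k + 1)) k m hmk]
        refine Finset.sum_congr rfl fun i hi => ?_
        simp only [Finset.mem_Icc] at hi
        have : min (k + 1) (i + l - 1) = k + 1 := by omega
        rw [this]
    have hB : ∑ i ∈ Finset.Icc 1 k, (f i (min k (i + l - 1)) - f (i + 1) (min k (i + l - 1)))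
        = ∑ i ∈ Finset.Ico 1 m, (f i (min k (i + l - 1)) - f (i + 1) (min k (i + l - 1)))
          + (f m k - f (k + 1) k) := by
      rw [split]
      congr 1
      rw [← tel_shield (fun i => f i k) k m hmk]
      refine Finset.sum_congr rfl fun i hi => ?_
      simp only [Finset.mem_Icc] at hi
      have : min k (i + l - 1) = k := by omega
      rw [this]
    rw [Finset.sum_Icc_succ_top (by omega : (1:ℕ) ≤ k + 1),
      Finset.sum_Icc_succ_top (by omega : (1:ℕ) ≤ k + 1), ih, hA]
    have e1 : max 1 (k + 1 + 1 - l) = m := by omega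
    have e2 : k + 1 - 1 = k := by omega
    have e3 : min (k + 1) (k + 1 + l - 1) = k + 1 := by omega
    rw [e1, e2, e3]
    linarith [hB]

/-- The von Neumann entropy of a density operator on a one-point index type is zero. -/
lemma vNE_unique_shield {n : Type*} [Fintype n] [DecidableEq n] [Unique n]
    (ρ : Matrix n n ℂ) (h : IsDensityOp ρ) : vNE ρ = 0 := by
  obtain ⟨hpsd, htr⟩ := h
  have hH : ρ.IsHermitian := hpsd.1
  have hdet : ρ.det = ∏ i, (hH.eigenvalues i : ℂ) := hH.det_eq_prod_eigenvalues
  rw [Matrix.det_unique, Finset.prod_unique_nonempty _ _ Finset.univ_nonempty] at hdet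
  have htr' : ρ default default = 1 := by
    rw [Matrix.trace, Finset.sum_unique_nonempty _ _ Finset.univ_nonempty] at htr
    exact htr
  have hev : hH.eigenvalues default = 1 := by
    have : ((hH.eigenvalues default : ℝ) : ℂ) = ((1 : ℝ) : ℂ) := by
      rw [← hdet, htr']; norm_num
    exact_mod_cast this
  rw [vNE, dif_pos hH, Finset.sum_unique_nonempty _ _ Finset.univ_nonempty, hev]
  simp

/-- **Forward–backward shield identity**: for an `l`-interval-consistent family of density
operators `ρ a b` on the intervals `{a,…,b} ⊆ {1,…,k}` (local dimension `d`), the sum over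
`i = 1,…,k` of `S(i|𝒩ᵢ⁻)` with backward shields `𝒩ᵢ⁻ = {max(1,i-l+1),…,i-1}` equals the sum
of `S(i|𝒩ᵢ⁺)` with forward shields `𝒩ᵢ⁺ = {i+1,…,min(k,i+l-1)}`. -/
theorem forward_backward_shield_identity {d : ℕ} (l k : ℕ) (hl : 2 ≤ l) (hd : 0 < d)
    (ρfam : ∀ a b : ℕ, Matrix ((Finset.Icc a b) → Fin d) ((Finset.Icc a b) → Fin d) ℂ)
    (hdens : ∀ a b : ℕ, 1 ≤ a → b ≤ k → b + 1 - a ≤ l → IsDensityOp (ρfam a b))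
    (hcons : ∀ (a a' b' b : ℕ) (ha : a ≤ a') (hb : b' ≤ b), 1 ≤ a → b ≤ k → b + 1 - a ≤ l →
      ρfam a' b' = margSub (Finset.Icc_subset_Icc ha hb) (ρfam a b)) :
    ∑ i ∈ Finset.Icc 1 k,
        (vNE (ρfam (max 1 (i + 1 - l)) i) - vNE (ρfam (max 1 (i + 1 - l)) (i - 1)))
      = ∑ i ∈ Finset.Icc 1 k,
        (vNE (ρfam i (min k (i + l - 1))) - vNE (ρfam (i + 1) (min k (i + l - 1)))) := by
  have h1 := key_shield (fun a b => vNE (ρfam a b)) l hl k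
  have hz1 : vNE (ρfam (k + 1) k) = 0 := by
    haveI : IsEmpty (↥(Finset.Icc (k + 1) k)) := by
      rw [Finset.isEmpty_coe_sort, Finset.Icc_eq_empty_iff]
      omega
    exact vNE_unique_shield _ (hdens (k + 1) k (by omega) le_rfl (by omega))
  have hz0 : vNE (ρfam 1 0) = 0 := by
    haveI : IsEmpty (↥(Finset.Icc 1 0)) := by
      rw [Finset.isEmpty_coe_sort, Finset.Icc_eq_empty_iff]
      omega
    exact vNE_unique_shield _ (hdens 1 0 le_rfl (Nat.zero_le _) (by omega))
  rw [h1, hz1, hz0]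
  ring

end
end

section
/- Weak monotonicity implies the nearest-predecessor MED inequality: let l ≥ 2 and let (ρ_I)_I be an l-interval-consistent family of density operators on the sites {1,…,k} with local dimension d. For i ∈ {1,…,k} define 𝒩_i^− = {max(1,i−l+1),…,i−1} and 𝒩_i^+ = {i+1,…,min(k,i+l−1)}. If the weak monotonicity inequalities S(i|𝒩_i^−) + S(i|𝒩_i^+) ≥ 0 hold for every i ∈ {1,…,k}, then Σ_{i=1}^k S(i|𝒩_i^−) ≥ 0. -/
open scoped Matrix Kronecker ComplexOrder

noncomputable section

lemma medAux_vNE_unique {n : Type*} [Fintype n] [DecidableEq n] [Unique n]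
    {ρ : Matrix n n ℂ} (h : IsDensityOp ρ) : vNE ρ = 0 := by
  have hH : ρ.IsHermitian := h.1.isHermitian
  have h1 := hH.det_eq_prod_eigenvalues
  rw [Matrix.det_unique, Fintype.prod_unique] at h1
  have h2 : ρ.trace = ρ default default := by
    simp [Matrix.trace, Matrix.diag, Fintype.sum_unique]
  have hlamr : hH.eigenvalues default = 1 := by
    have h3 : ρ.trace = ((hH.eigenvalues default : ℝ) : ℂ) := by rw [h2, h1]; norm_cast
    rw [h.2] at h3
    exact_mod_cast h3.symm
  rw [vNE, dif_pos hH, Fintype.sum_unique, hlamr]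
  simp


lemma tel_aux (g : ℕ → ℝ) : ∀ (K t : ℕ), t ≤ K + 1 →
    ∑ i ∈ Finset.Icc t K, (g i - g (i + 1)) = g t - g (K + 1) := by
  intro K
  induction K with
  | zero =>
    intro t ht
    interval_cases t
    · simp
    · simp
  | succ K ih =>
    intro t ht
    rcases Nat.lt_or_ge t (K + 2) with h | h
    · have h' : t ≤ K + 1 := by omega
      rw [Finset.sum_Icc_succ_top h', ih t h']
      ring
    · have : t = K + 2 := by omega
      subst this
      simp [Finset.Icc_eq_empty_of_lt (by omega : K + 1 < K + 2)]

lemma key_aux (l : ℕ) (hl : 2 ≤ l) (f : ℕ → ℕ → ℝ) (hf : ∀ a b, b < a → f a b = 0) :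
    ∀ k : ℕ, ∑ i ∈ Finset.Icc 1 k,
        (f (max 1 (i + 1 - l)) i - f (max 1 (i + 1 - l)) (i - 1))
      = ∑ i ∈ Finset.Icc 1 k,
        (f i (min k (i + l - 1)) - f (i + 1) (min k (i + l - 1))) := by
  intro k
  induction k with
  | zero => simp
  | succ K ih =>
    set t := max 1 (K + 2 - l) with ht
    have ht1 : 1 ≤ t := le_max_left _ _
    have htK : t ≤ K + 1 := by omega
    -- split the new B-sum
    have hsplit : ∀ (F : ℕ → ℝ) (m : ℕ), t - 1 ≤ m →
        ∑ i ∈ Finset.Icc 1 m, F i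
          = ∑ i ∈ Finset.Icc 1 (t - 1), F i + ∑ i ∈ Finset.Icc t m, F i := by
      intro F m hm
      have e1 : Finset.Icc 1 m = Finset.Ioc 0 m := Finset.Icc_add_one_left_eq_Ioc 0 m
      have e2 : Finset.Icc 1 (t - 1) = Finset.Ioc 0 (t - 1) := Finset.Icc_add_one_left_eq_Ioc 0 (t - 1)
      have e3 : Finset.Icc t m = Finset.Ioc (t - 1) m := by
        rw [← Finset.Icc_add_one_left_eq_Ioc]
        congr 1
        omega
      rw [e1, e2, e3, Finset.sum_Ioc_consecutive _ (by omega) hm]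
    have hB1 := hsplit
      (fun i => f i (min (K + 1) (i + l - 1)) - f (i + 1) (min (K + 1) (i + l - 1)))
      (K + 1) (by omega)
    have hB2 := hsplit
      (fun i => f i (min K (i + l - 1)) - f (i + 1) (min K (i + l - 1)))
      K (by omega)
    have hc : ∑ i ∈ Finset.Icc 1 (t - 1),
        (f i (min (K + 1) (i + l - 1)) - f (i + 1) (min (K + 1) (i + l - 1)))
        = ∑ i ∈ Finset.Icc 1 (t - 1),
        (f i (min K (i + l - 1)) - f (i + 1) (min K (i + l - 1))) := by
      refine Finset.sum_congr rfl fun i hi => ?_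
      have hi' := Finset.mem_Icc.mp hi
      have : min (K + 1) (i + l - 1) = min K (i + l - 1) := by omega
      rw [this]
    have htelnew : ∑ i ∈ Finset.Icc t (K + 1),
        (f i (min (K + 1) (i + l - 1)) - f (i + 1) (min (K + 1) (i + l - 1)))
        = f t (K + 1) := by
      have hcongr : ∑ i ∈ Finset.Icc t (K + 1),
          (f i (min (K + 1) (i + l - 1)) - f (i + 1) (min (K + 1) (i + l - 1)))
          = ∑ i ∈ Finset.Icc t (K + 1), (f i (K + 1) - f (i + 1) (K + 1)) := by
        refine Finset.sum_congr rfl fun i hi => ?_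
        have hi' := Finset.mem_Icc.mp hi
        have : min (K + 1) (i + l - 1) = K + 1 := by omega
        rw [this]
      rw [hcongr, tel_aux (fun i => f i (K + 1)) (K + 1) t (by omega),
        hf (K + 2) (K + 1) (by omega)]
      ring
    have htelold : ∑ i ∈ Finset.Icc t K,
        (f i (min K (i + l - 1)) - f (i + 1) (min K (i + l - 1)))
        = f t K := by
      have hcongr : ∑ i ∈ Finset.Icc t K,
          (f i (min K (i + l - 1)) - f (i + 1) (min K (i + l - 1)))
          = ∑ i ∈ Finset.Icc t K, (f i K - f (i + 1) K) := by
        refine Finset.sum_congr rfl fun i hi => ?_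
        have hi' := Finset.mem_Icc.mp hi
        have : min K (i + l - 1) = K := by omega
        rw [this]
      rw [hcongr, tel_aux (fun i => f i K) K t (by omega), hf (K + 1) K (by omega)]
      ring
    have hA : ∑ i ∈ Finset.Icc 1 (K + 1),
        (f (max 1 (i + 1 - l)) i - f (max 1 (i + 1 - l)) (i - 1))
        = ∑ i ∈ Finset.Icc 1 K,
          (f (max 1 (i + 1 - l)) i - f (max 1 (i + 1 - l)) (i - 1))
          + (f t (K + 1) - f t K) := by
      rw [Finset.sum_Icc_succ_top (by omega : 1 ≤ K + 1)]
      have e1 : max 1 (K + 1 + 1 - l) = t := by omega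
      have e2 : K + 1 - 1 = K := by omega
      rw [e1, e2]
    rw [hA, ih, hB1, hB2, hc, htelnew, htelold]
    ring

/-- **Weak monotonicity implies the nearest-predecessor MED inequality**: for an
`l`-interval-consistent family of density operators `ρ a b` on the intervals
`{a,…,b} ⊆ {1,…,k}` (local dimension `d`), if `S(i|𝒩ᵢ⁻) + S(i|𝒩ᵢ⁺) ≥ 0` for every
`i ∈ {1,…,k}`, where `𝒩ᵢ⁻ = {max(1,i-l+1),…,i-1}` and `𝒩ᵢ⁺ = {i+1,…,min(k,i+l-1)}`,
then `Σ_{i=1}^k S(i|𝒩ᵢ⁻) ≥ 0`. -/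
theorem med_from_weak_monotonicity {d : ℕ} (l k : ℕ) (hl : 2 ≤ l) (hd : 0 < d)
    (ρfam : ∀ a b : ℕ, Matrix ((Finset.Icc a b) → Fin d) ((Finset.Icc a b) → Fin d) ℂ)
    (hdens : ∀ a b : ℕ, 1 ≤ a → b ≤ k → b + 1 - a ≤ l → IsDensityOp (ρfam a b))
    (hcons : ∀ (a a' b' b : ℕ) (ha : a ≤ a') (hb : b' ≤ b), 1 ≤ a → b ≤ k → b + 1 - a ≤ l →
      ρfam a' b' = margSub (Finset.Icc_subset_Icc ha hb) (ρfam a b))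
    (hWM : ∀ i ∈ Finset.Icc 1 k,
      0 ≤ (vNE (ρfam (max 1 (i + 1 - l)) i) - vNE (ρfam (max 1 (i + 1 - l)) (i - 1)))
        + (vNE (ρfam i (min k (i + l - 1))) - vNE (ρfam (i + 1) (min k (i + l - 1))))) :
    0 ≤ ∑ i ∈ Finset.Icc 1 k,
        (vNE (ρfam (max 1 (i + 1 - l)) i) - vNE (ρfam (max 1 (i + 1 - l)) (i - 1))) := by
  classical
  have hempty : ∀ a b : ℕ, 1 ≤ a → b ≤ k → b < a → vNE (ρfam a b) = 0 := by
    intro a b ha hb hba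
    have hIcc : Finset.Icc a b = ∅ := Finset.Icc_eq_empty (by omega)
    haveI : IsEmpty ((Finset.Icc a b : Finset ℕ) : Type) :=
      Finset.isEmpty_coe_sort.mpr hIcc
    haveI : Unique (((Finset.Icc a b : Finset ℕ) : Type) → Fin d) := Pi.uniqueOfIsEmpty _
    exact medAux_vNE_unique (hdens a b ha hb (by omega))
  set g : ℕ → ℕ → ℝ := fun a b => if b < a then 0 else vNE (ρfam a b) with hg
  have hg0 : ∀ a b, b < a → g a b = 0 := fun a b h => if_pos h
  have hgeq : ∀ a b, 1 ≤ a → b ≤ k → g a b = vNE (ρfam a b) := by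
    intro a b ha hb
    by_cases h : b < a
    · rw [hg]
      simp only
      rw [if_pos h, hempty a b ha hb h]
    · rw [hg]
      simp only
      rw [if_neg h]
  have hkey := key_aux l hl g hg0 k
  have hsumA : ∑ i ∈ Finset.Icc 1 k,
      (vNE (ρfam (max 1 (i + 1 - l)) i) - vNE (ρfam (max 1 (i + 1 - l)) (i - 1)))
      = ∑ i ∈ Finset.Icc 1 k,
      (g (max 1 (i + 1 - l)) i - g (max 1 (i + 1 - l)) (i - 1)) := by
    refine Finset.sum_congr rfl fun i hi => ?_
    have hi' := Finset.mem_Icc.mp hi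
    rw [hgeq _ _ (le_max_left _ _) (by omega), hgeq _ _ (le_max_left _ _) (by omega)]
  have hsumB : ∑ i ∈ Finset.Icc 1 k,
      (vNE (ρfam i (min k (i + l - 1))) - vNE (ρfam (i + 1) (min k (i + l - 1))))
      = ∑ i ∈ Finset.Icc 1 k,
      (g i (min k (i + l - 1)) - g (i + 1) (min k (i + l - 1))) := by
    refine Finset.sum_congr rfl fun i hi => ?_
    have hi' := Finset.mem_Icc.mp hi
    rw [hgeq _ _ (by omega) (min_le_left _ _), hgeq _ _ (by omega) (min_le_left _ _)]
  have hpos : 0 ≤ ∑ i ∈ Finset.Icc 1 k,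
      ((vNE (ρfam (max 1 (i + 1 - l)) i) - vNE (ρfam (max 1 (i + 1 - l)) (i - 1)))
        + (vNE (ρfam i (min k (i + l - 1))) - vNE (ρfam (i + 1) (min k (i + l - 1))))) :=
    Finset.sum_nonneg hWM
  rw [Finset.sum_add_distrib] at hpos
  linarith [hsumA, hsumB, hkey, hpos]

end
end

section
/- Periodic ground energy density lower-bounds the translation-invariant relaxation: let h be a Hermitian operator on ℂ^d ⊗ ℂ^d, and for m ≥ 2 let H_m = Σ_{i=1}^m h_{i,i+1} be the periodic-chain Hamiltonian on (ℂ^d)^{⊗m}, where h_{i,i+1} acts as h on sites i and i+1 (with site m+1 identified with site 1) and as the identity elsewhere. Then (1/m)·λ_min(H_m) ≥ E_m, where λ_min denotes the smallest eigenvalue and E_m = min{ Tr[h ρ_{12}] : ρ a density operator on (ℂ^d)^{⊗m} with Tr_1[ρ] = Tr_m[ρ] }. -/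
open scoped Matrix ComplexOrder

noncomputable section

/-- Marginal of a state on the chain `Fin m` (sites `0,…,m-1`) on the window of `j`
consecutive sites `{t,…,t+j-1}`, tracing out all other sites. -/
noncomputable def margW {m d : ℕ} (t j : ℕ)
    (ρ : Matrix (Fin m → Fin d) (Fin m → Fin d) ℂ) :
    Matrix (Fin j → Fin d) (Fin j → Fin d) ℂ :=
  Matrix.of fun f g => ∑ k : ({x : Fin m // x.1 < t ∨ t + j ≤ x.1} → Fin d),
    ρ (fun x => if h : t ≤ x.1 ∧ x.1 < t + j then f ⟨x.1 - t, by omega⟩ else k ⟨x, by omega⟩)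
      (fun x => if h : t ≤ x.1 ∧ x.1 < t + j then g ⟨x.1 - t, by omega⟩ else k ⟨x, by omega⟩)

/-- The two-body marginal `ρ_{12}` on the first two sites of a chain state, as a matrix
indexed by `Fin d × Fin d`. -/
noncomputable def marg12 {m d : ℕ} (ρ : Matrix (Fin m → Fin d) (Fin m → Fin d) ℂ) :
    Matrix (Fin d × Fin d) (Fin d × Fin d) ℂ :=
  Matrix.of fun p q => margW 0 2 ρ ![p.1, p.2] ![q.1, q.2]

/-- `E_m`: the optimal value of the translation-invariant marginal relaxation at level `m`:
the minimum of `Tr[h ρ_{12}]` over density operators `ρ` on `(ℂ^d)^{⊗m}` whose first-site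
and last-site partial traces coincide. -/
noncomputable def Em (d m : ℕ) (h : Matrix (Fin d × Fin d) (Fin d × Fin d) ℂ) : ℝ :=
  sInf { x : ℝ | ∃ ρ : Matrix (Fin m → Fin d) (Fin m → Fin d) ℂ,
    IsDensityOp ρ ∧ margW 1 (m - 1) ρ = margW 0 (m - 1) ρ ∧
    x = (Matrix.trace (h * marg12 ρ)).re }

/-- The cyclic successor of a site on the periodic chain `Fin m`. -/
def nextS {m : ℕ} (i : Fin m) : Fin m := ⟨(i.1 + 1) % m, Nat.mod_lt _ i.pos⟩

/-- The local Hamiltonian term `h_{i,i+1}` acting as `h` on the (cyclically consecutive)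
sites `i, i+1` of the periodic chain `Fin m` and as the identity elsewhere. -/
noncomputable def hterm (d : ℕ) {m : ℕ} (h : Matrix (Fin d × Fin d) (Fin d × Fin d) ℂ)
    (i : Fin m) : Matrix (Fin m → Fin d) (Fin m → Fin d) ℂ :=
  Matrix.of fun f g =>
    if ∀ x : Fin m, x ≠ i → x ≠ nextS i → f x = g x then
      h (f i, f (nextS i)) (g i, g (nextS i)) else 0

/-- The smallest eigenvalue of a (Hermitian) matrix. -/
noncomputable def lamMin {n : Type*} [Fintype n] [DecidableEq n] (M : Matrix n n ℂ) : ℝ :=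
  if h : M.IsHermitian then ⨅ i, h.eigenvalues i else 0

end

/-!
Let `ρ₀` be a ground-state projector of `H_m`, so `Tr[H_m ρ₀] = λ_min(H_m)`, and let `ρ` be the
average of its `m` cyclic translates. Then `ρ` is a translation-invariant density operator, hence
its marginals on sites `2,…,m` and `1,…,m-1` agree and `ρ` is admissible for `E_m`. Since
`h_{12} = h ⊗ 1` we have `Tr[h ρ_{12}] = Tr[h_{12} ρ]`, and the covariance
`T_s h_{i,i+1} T_s* = h_{i+s,i+s+1}` turns this into `(1/m) Σ_i Tr[h_{i,i+1} ρ₀] = λ_min(H_m)/m`.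
The admissible values are bounded below by `λ_min(h_{12})`, so their infimum `E_m` is at most that.
-/

open Matrix Finset
open scoped Kronecker

section Trace

variable {n : Type*} [Fintype n]

lemma trace_submatrix_equiv {l R : Type*} [Fintype l] [AddCommMonoid R] (A : Matrix n n R)
    (e : l ≃ n) : (A.submatrix e e).trace = A.trace :=
  e.sum_comp A.diag

lemma trace_mul_vecMulVec_star (A : Matrix n n ℂ) (v : n → ℂ) :
    (A * vecMulVec v (star v)).trace = star v ⬝ᵥ (A *ᵥ v) := by
  rw [mul_vecMulVec, trace_vecMulVec, dotProduct_comm]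

lemma Matrix.PosSemidef.trace_mul_nonneg {A B : Matrix n n ℂ} (hA : A.PosSemidef)
    (hB : B.PosSemidef) : 0 ≤ (A * B).trace := by
  obtain ⟨k, v, rfl⟩ := posSemidef_iff_eq_sum_vecMulVec.mp hB
  rw [mul_sum, trace_sum]
  exact sum_nonneg fun i _ => trace_mul_vecMulVec_star A (v i) ▸ hA.dotProduct_mulVec_nonneg _

noncomputable def traceRight {a k R : Type*} [Fintype k] [AddCommMonoid R]
    (ρ : Matrix (a × k) (a × k) R) : Matrix a a R :=
  of fun p q => ∑ x, ρ (p, x) (q, x)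

lemma trace_kronecker_one_mul {a k R : Type*} [Fintype a] [Fintype k] [DecidableEq k]
    [Semiring R] (A : Matrix a a R) (ρ : Matrix (a × k) (a × k) R) :
    ((A ⊗ₖ (1 : Matrix k k R)) * ρ).trace = (A * traceRight ρ).trace := by
  simp only [trace, Matrix.diag, mul_apply, kroneckerMap_apply, one_apply, traceRight, of_apply,
    Fintype.sum_prod_type, mul_ite, mul_one, mul_zero, ite_mul, zero_mul, sum_ite_eq, mem_univ,
    if_true, mul_sum]
  exact sum_congr rfl fun _ _ => sum_comm

end Trace

section Spectral

variable {n : Type*} [Fintype n] [DecidableEq n]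

lemma lamMin_le_eigenvalues {M : Matrix n n ℂ} (hM : M.IsHermitian) (i : n) :
    lamMin M ≤ hM.eigenvalues i := by
  rw [lamMin, dif_pos hM]
  exact ciInf_le (Finite.bddBelow_range _) i

lemma posSemidef_sub_lamMin_smul_one {M : Matrix n n ℂ} (hM : M.IsHermitian) :
    (M - (lamMin M : ℂ) • 1).PosSemidef := by
  rw [posSemidef_iff_isHermitian_and_spectrum_nonneg]
  refine ⟨hM.sub (by simp [IsHermitian, conjTranspose_smul]), ?_⟩
  rw [← Algebra.algebraMap_eq_smul_one, ← spectrum.sub_singleton_eq, hM.spectrum_eq_image_range]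
  rintro _ ⟨_, ⟨_, ⟨i, rfl⟩, rfl⟩, c, rfl, rfl⟩
  simpa [← Complex.ofReal_sub, Complex.zero_le_real] using lamMin_le_eigenvalues hM i

lemma lamMin_le_re_trace_mul {M ρ : Matrix n n ℂ} (hM : M.IsHermitian) (hρ : IsDensityOp ρ) :
    lamMin M ≤ (M * ρ).trace.re := by
  have := Complex.nonneg_iff.mp ((posSemidef_sub_lamMin_smul_one hM).trace_mul_nonneg hρ.1)
  simpa [sub_mul, hρ.2] using this.1

lemma exists_isDensityOp_trace_mul_eq_lamMin [Nonempty n] {M : Matrix n n ℂ}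
    (hM : M.IsHermitian) : ∃ ρ, IsDensityOp ρ ∧ (M * ρ).trace = (lamMin M : ℂ) := by
  obtain ⟨i, hi⟩ : ∃ i, hM.eigenvalues i = lamMin M := by
    rw [lamMin, dif_pos hM]
    exact exists_eq_ciInf_of_finite
  set v : n → ℂ := (hM.eigenvectorBasis i).ofLp
  have hv : star v ⬝ᵥ v = 1 := by
    rw [dotProduct_comm, ← EuclideanSpace.inner_eq_star_dotProduct]
    exact inner_self_eq_one_of_norm_eq_one (hM.eigenvectorBasis.orthonormal.1 i)
  refine ⟨vecMulVec v (star v), ⟨posSemidef_vecMulVec_self_star v, ?_⟩, ?_⟩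
  · rw [trace_vecMulVec, dotProduct_comm, hv]
  · rw [trace_mul_vecMulVec_star, hM.mulVec_eigenvectorBasis, dotProduct_smul, hv, hi]
    simp

lemma IsDensityOp.submatrix_equiv {l : Type*} [Fintype l] [DecidableEq l] {ρ : Matrix n n ℂ}
    (hρ : IsDensityOp ρ) (e : l ≃ n) :
    IsDensityOp (ρ.submatrix e e) :=
  ⟨hρ.1.submatrix e, (trace_submatrix_equiv ρ e).trans hρ.2⟩

lemma isDensityOp_average {ι : Type*} [Fintype ι] [Nonempty ι] {ρ : ι → Matrix n n ℂ}
    (hρ : ∀ i, IsDensityOp (ρ i)) : IsDensityOp ((Fintype.card ι : ℝ)⁻¹ • ∑ i, ρ i) := by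
  refine ⟨(posSemidef_sum _ fun i _ => (hρ i).1).smul (by positivity), ?_⟩
  rw [trace_smul, trace_sum, sum_congr rfl fun i _ => (hρ i).2]
  simp [Complex.real_smul]

end Spectral

lemma hterm_isHermitian {d m : ℕ} {h : Matrix (Fin d × Fin d) (Fin d × Fin d) ℂ}
    (hh : h.IsHermitian) (i : Fin m) : (hterm d h i).IsHermitian := by
  ext f g
  have hcond : (∀ x, x ≠ i → x ≠ nextS i → g x = f x) ↔ ∀ x, x ≠ i → x ≠ nextS i → f x = g x :=
    forall_congr' fun x => by simp only [eq_comm]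
  simp only [conjTranspose_apply, hterm, of_apply, hcond]
  split_ifs
  · exact congrFun₂ hh _ _
  · exact star_zero _

section Translation

variable {d m : ℕ} [NeZero m]

def shiftConfig {α : Type*} (s : Fin m) : (Fin m → α) ≃ (Fin m → α) :=
  (Equiv.addRight s).symm.arrowCongr (Equiv.refl α)

@[simp]
lemma shiftConfig_apply {α : Type*} (s : Fin m) (f : Fin m → α) (x : Fin m) :
    shiftConfig s f x = f (x + s) :=
  rfl

lemma shiftConfig_shiftConfig {α : Type*} (s t : Fin m) (f : Fin m → α) :
    shiftConfig s (shiftConfig t f) = shiftConfig (s + t) f := by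
  ext x
  simp [add_assoc]

lemma nextS_eq_add_one (i : Fin m) : nextS i = i + 1 := by
  ext
  simp [nextS, Fin.val_add]

lemma hterm_submatrix_shiftConfig (h : Matrix (Fin d × Fin d) (Fin d × Fin d) ℂ) (i s : Fin m) :
    (hterm d h i).submatrix (shiftConfig s) (shiftConfig s) = hterm d h (i + s) := by
  ext f g
  have hcond : (∀ x, x ≠ i → x ≠ i + 1 → f (x + s) = g (x + s)) ↔
      ∀ y, y ≠ i + s → y ≠ i + s + 1 → f y = g y :=
    (Equiv.addRight s).forall_congr fun {x} => by simp [add_right_comm i s 1]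
  simp only [hterm, submatrix_apply, of_apply, shiftConfig_apply, nextS_eq_add_one, hcond,
    add_right_comm i 1 s]

noncomputable def translationAverage (ρ : Matrix (Fin m → Fin d) (Fin m → Fin d) ℂ) :
    Matrix (Fin m → Fin d) (Fin m → Fin d) ℂ :=
  (m : ℝ)⁻¹ • ∑ t : Fin m, ρ.submatrix (shiftConfig t) (shiftConfig t)

lemma isDensityOp_translationAverage {ρ : Matrix (Fin m → Fin d) (Fin m → Fin d) ℂ}
    (hρ : IsDensityOp ρ) : IsDensityOp (translationAverage ρ) := by
  simpa [translationAverage] using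
    isDensityOp_average fun t : Fin m => hρ.submatrix_equiv (shiftConfig t)

lemma translationAverage_submatrix_shiftConfig (ρ : Matrix (Fin m → Fin d) (Fin m → Fin d) ℂ)
    (s : Fin m) :
    (translationAverage ρ).submatrix (shiftConfig s) (shiftConfig s) = translationAverage ρ := by
  ext f g
  simp only [translationAverage, submatrix_apply, Matrix.smul_apply, Matrix.sum_apply,
    shiftConfig_shiftConfig]
  congr 1
  exact Equiv.sum_comp (Equiv.addRight s) fun t => ρ (shiftConfig t f) (shiftConfig t g)

lemma trace_hterm_mul_translationAverage (h : Matrix (Fin d × Fin d) (Fin d × Fin d) ℂ)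
    (i : Fin m) (ρ : Matrix (Fin m → Fin d) (Fin m → Fin d) ℂ) :
    (hterm d h i * translationAverage ρ).trace = (m : ℝ)⁻¹ • ((∑ j, hterm d h j) * ρ).trace := by
  rw [translationAverage, Matrix.mul_smul, trace_smul, mul_sum, trace_sum, sum_mul, trace_sum]
  congr 1
  refine (sum_congr rfl fun (t : Fin m) _ => ?_).trans
    ((Equiv.subLeft i).sum_comp fun j => (hterm d h j * ρ).trace)
  have hi : hterm d h i = (hterm d h (i - t)).submatrix (shiftConfig t) (shiftConfig t) := by
    rw [hterm_submatrix_shiftConfig, sub_add_cancel]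
  rw [hi, submatrix_mul_equiv, trace_submatrix_equiv, Equiv.subLeft_apply]

end Translation

section Marginals

variable {d m : ℕ}

/-- The index type and formula are literally those of `margW 0 2`, so that
`marg12_eq_traceRight` holds by `rfl`. -/
def splitFirstTwo (hm : 2 ≤ m) :
    (Fin d × Fin d) × ({x : Fin m // x.1 < 0 ∨ 0 + 2 ≤ x.1} → Fin d) ≃ (Fin m → Fin d) where
  toFun z x := if hx : 0 ≤ x.1 ∧ x.1 < 0 + 2 then ![z.1.1, z.1.2] ⟨x.1 - 0, by omega⟩
    else z.2 ⟨x, by omega⟩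
  invFun f := ((f ⟨0, by omega⟩, f ⟨1, by omega⟩), fun x => f x.1)
  left_inv := by
    rintro ⟨⟨a, b⟩, k⟩
    refine Prod.ext (Prod.ext ?_ ?_) (funext fun x => ?_)
    · simp
    · simp
    · simpa using fun h => absurd h (by have := x.2; omega)
  right_inv f := by
    funext x
    dsimp only
    split_ifs with hx
    · obtain ⟨_ | _ | x, hxm⟩ := x
      · rfl
      · rfl
      · simp at hx
    · rfl

lemma marg12_eq_traceRight (hm : 2 ≤ m) (ρ : Matrix (Fin m → Fin d) (Fin m → Fin d) ℂ) :
    marg12 ρ = traceRight (ρ.submatrix (splitFirstTwo hm) (splitFirstTwo hm)) :=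
  rfl

lemma hterm_zero_submatrix_splitFirstTwo [NeZero m] (hm : 2 ≤ m)
    (h : Matrix (Fin d × Fin d) (Fin d × Fin d) ℂ) :
    (hterm d h 0).submatrix (splitFirstTwo hm) (splitFirstTwo hm) = h ⊗ₖ 1 := by
  have hnext : ((nextS (0 : Fin m)) : ℕ) = 1 := by simp [nextS, Nat.one_mod_eq_one]; omega
  ext ⟨p, k⟩ ⟨q, l⟩
  have hcond : (∀ x : Fin m, x ≠ 0 → x ≠ nextS 0 →
      splitFirstTwo hm (p, k) x = splitFirstTwo hm (q, l) x) ↔ k = l := by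
    constructor
    · intro H
      funext x
      have hx : ¬ x.1.1 ≤ 1 := by have := x.2; omega
      have hx0 : x.1 ≠ 0 := fun h0 => hx (by simp [h0])
      have hx1 : x.1 ≠ nextS 0 := fun h1 => hx (by rw [h1, hnext])
      simpa [splitFirstTwo, hx] using H x.1 hx0 hx1
    · rintro rfl x h0 h1
      have hx : ¬ x.1 ≤ 1 := by
        have : x.1 ≠ 0 := fun h => h0 (Fin.ext (by simpa using h))
        have : x.1 ≠ 1 := fun h => h1 (Fin.ext (by rw [hnext, h]))
        omega
      simp [splitFirstTwo, hx]
  simp only [hterm, submatrix_apply, of_apply, kroneckerMap_apply, one_apply, hcond]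
  split_ifs
  · simp [splitFirstTwo, hnext]
  · simp

lemma trace_mul_marg12 [NeZero m] (hm : 2 ≤ m) (h : Matrix (Fin d × Fin d) (Fin d × Fin d) ℂ)
    (ρ : Matrix (Fin m → Fin d) (Fin m → Fin d) ℂ) :
    (h * marg12 ρ).trace = (hterm d h 0 * ρ).trace := by
  rw [marg12_eq_traceRight hm, ← trace_kronecker_one_mul, ← hterm_zero_submatrix_splitFirstTwo hm,
    submatrix_mul_equiv, trace_submatrix_equiv]

lemma margW_apply_of_compl_eq {t j : ℕ} (c : Fin m) (hc : c.1 < t ∨ t + j ≤ c.1)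
    (hcompl : ∀ x : Fin m, x.1 < t ∨ t + j ≤ x.1 → x = c)
    (ρ : Matrix (Fin m → Fin d) (Fin m → Fin d) ℂ) (f g : Fin j → Fin d) :
    margW t j ρ f g = ∑ a : Fin d,
      ρ (fun x => if h : t ≤ x.1 ∧ x.1 < t + j then f ⟨x.1 - t, by omega⟩ else a)
        (fun x => if h : t ≤ x.1 ∧ x.1 < t + j then g ⟨x.1 - t, by omega⟩ else a) := by
  have : Unique {x : Fin m // x.1 < t ∨ t + j ≤ x.1} :=
    ⟨⟨⟨c, hc⟩⟩, fun x => Subtype.ext (hcompl x.1 x.2)⟩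
  exact ((Equiv.funUnique _ (Fin d)).symm.sum_comp _).symm

lemma margW_one_eq_margW_zero_of_submatrix_shiftConfig_eq [NeZero m]
    {ρ : Matrix (Fin m → Fin d) (Fin m → Fin d) ℂ}
    (hρ : ρ.submatrix (shiftConfig 1) (shiftConfig 1) = ρ) :
    margW 1 (m - 1) ρ = margW 0 (m - 1) ρ := by
  ext f g
  rw [margW_apply_of_compl_eq 0 (by simp) (fun x hx => Fin.ext (by rw [Fin.val_zero]; omega)),
    margW_apply_of_compl_eq ⟨m - 1, by have := NeZero.pos m; omega⟩ (by simp)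
      (fun x hx => Fin.ext (by simp; omega))]
  refine sum_congr rfl fun a _ => ?_
  conv_lhs => rw [← hρ]
  have hcfg : ∀ u : Fin (m - 1) → Fin d, shiftConfig 1
      (fun x : Fin m => if h : 1 ≤ x.1 ∧ x.1 < 1 + (m - 1) then u ⟨x.1 - 1, by omega⟩ else a) =
      fun x => if h : 0 ≤ x.1 ∧ x.1 < 0 + (m - 1) then u ⟨x.1 - 0, by omega⟩ else a := by
    intro u
    ext x
    rw [shiftConfig_apply]
    by_cases hlast : x.1 + 1 < m
    · simp only [Fin.val_add_one_of_lt' hlast,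
        dif_pos (show 1 ≤ x.1 + 1 ∧ x.1 + 1 < 1 + (m - 1) by omega),
        dif_pos (show 0 ≤ x.1 ∧ x.1 < 0 + (m - 1) by omega), Nat.add_sub_cancel, Nat.sub_zero]
    · have hx : ((x + 1 : Fin m) : ℕ) = 0 := by
        rw [Fin.val_add, Fin.val_one', Nat.add_mod_mod, show x.1 + 1 = m by omega, Nat.mod_self]
      simp only [hx, dif_neg (show ¬(1 ≤ 0 ∧ 0 < 1 + (m - 1)) by omega),
        dif_neg (show ¬(0 ≤ x.1 ∧ x.1 < 0 + (m - 1)) by omega)]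
  simp only [submatrix_apply, hcfg]

lemma Em_le_re_trace_mul_marg12 [NeZero m] (hm : 2 ≤ m)
    {h : Matrix (Fin d × Fin d) (Fin d × Fin d) ℂ} (hh : h.IsHermitian)
    {ρ : Matrix (Fin m → Fin d) (Fin m → Fin d) ℂ} (hρ : IsDensityOp ρ)
    (hcons : margW 1 (m - 1) ρ = margW 0 (m - 1) ρ) :
    Em d m h ≤ (h * marg12 ρ).trace.re := by
  refine csInf_le ⟨lamMin (hterm d h (0 : Fin m)), ?_⟩ ⟨ρ, hρ, hcons, rfl⟩
  rintro _ ⟨σ, hσ, -, rfl⟩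
  rw [trace_mul_marg12 hm]
  exact lamMin_le_re_trace_mul (hterm_isHermitian hh 0) hσ

end Marginals

/-- **Periodic ground energy density lower-bounds the translation-invariant relaxation**:
for a Hermitian two-site interaction `h` on `ℂ^d ⊗ ℂ^d` and the periodic-chain Hamiltonian
`H_m = Σ_{i=1}^m h_{i,i+1}` on `(ℂ^d)^{⊗m}` (site `m+1` identified with site `1`),
`(1/m)·λ_min(H_m) ≥ E_m`. -/
theorem periodic_ground_energy_ge_Em {d m : ℕ} (hd : 0 < d) (hm : 2 ≤ m)
    (h : Matrix (Fin d × Fin d) (Fin d × Fin d) ℂ) (hh : h.IsHermitian) :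
    Em d m h ≤ (1 / (m : ℝ)) * lamMin (∑ i : Fin m, hterm d h i) := by
  have : NeZero m := ⟨by omega⟩
  have : Nonempty (Fin d) := ⟨⟨0, hd⟩⟩
  have hH : (∑ i : Fin m, hterm d h i).IsHermitian :=
    (conjTranspose_sum _ _).trans (sum_congr rfl fun i _ => hterm_isHermitian hh i)
  obtain ⟨ρ₀, hρ₀, hground⟩ := exists_isDensityOp_trace_mul_eq_lamMin hH
  calc Em d m h ≤ (h * marg12 (translationAverage ρ₀)).trace.re :=
        Em_le_re_trace_mul_marg12 hm hh (isDensityOp_translationAverage hρ₀)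
          (margW_one_eq_margW_zero_of_submatrix_shiftConfig_eq
            (translationAverage_submatrix_shiftConfig ρ₀ 1))
    _ = (1 / (m : ℝ)) * lamMin (∑ i : Fin m, hterm d h i) := by
        rw [trace_mul_marg12 hm, trace_hterm_mul_translationAverage, hground, one_div,
          Complex.real_smul, ← Complex.ofReal_mul, Complex.ofReal_re]
end
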